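/- arXiv:2012.00472 — 4 statements merged into one kernel-verified Lean document; each statement's English description precedes it below -/
import Mathlib

section
/- Let α be a type of messages with a strict partial order ≺ (modelling causal precedence), let σ be a type of replica states, and let f : σ → α → σ commute on concurrent messages. If l₁ and l₂ are lists over α that are permutations of each other, each contains no duplicate elements, and each respects causal order, then for every initial state s we have List.foldl f s l₁ = List.foldl f s l₂. (This is the convergence argument: two correct replicas that deliver the same set of messages, each in some causal order, end in the same state.) -/
/-- A list `l` respects causal order w.r.t. the causal precedence relation
`prec`: it has no duplicates, and whenever `prec a b` and both occur in `l`,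
then `a` occurs before `b` in `l`. -/
def RespectsCausalOrder {α : Type*} (prec : α → α → Prop) (l : List α) : Prop :=
  l.Nodup ∧ ∀ a b : α, prec a b → a ∈ l → b ∈ l → [a, b].Sublist l

/-!
A list respecting causal order is `Pairwise (fun a b => ¬ prec b a)`: no message appears after
one it causally precedes. Induct on `l₁ = a :: t` and write
`l₂ = u ++ a :: v` at the first occurrence of `a`: every `x ∈ u` comes after `a` in `l₁` and
before `a` in `l₂`, so `x` and `a` are concurrent. Hence `a` commutes to the front of `l₂`,
leaving the permutations `t` and `u ++ v`, which are again pairwise ordered.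
-/

theorem List.Nodup.not_sublist_swap {α : Type*} {a b : α} {l : List α} (hl : l.Nodup)
    (hab : [a, b].Sublist l) : ¬ [b, a].Sublist l := by
  induction l with
  | nil => simp at hab
  | cons c l ih =>
    rw [nodup_cons] at hl
    intro hba
    cases hab with
    | cons _ hab =>
      cases hba with
      | cons _ hba => exact ih hl.2 hab hba
      | cons_cons _ hba => exact hl.1 (hab.subset (by simp))
    | cons_cons _ hab =>
      cases hba with
      | cons _ hba => exact hl.1 (hba.subset (by simp))
      | cons_cons _ hba => exact hl.1 (hba.subset (by simp))

theorem RespectsCausalOrder.pairwise {α : Type*} {prec : α → α → Prop} {l : List α}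
    (hl : RespectsCausalOrder prec l) : l.Pairwise (fun a b => ¬ prec b a) :=
  List.pairwise_iff_forall_sublist.2 fun hab hba =>
    hl.1.not_sublist_swap hab (hl.2 _ _ hba (hab.subset (by simp)) (hab.subset (by simp)))

theorem List.foldl_cons_eq_apply_foldl_of_forall_mem {α σ : Type*} {f : σ → α → σ} {a : α}
    {u : List α} (h : ∀ (s : σ), ∀ x ∈ u, f (f s a) x = f (f s x) a) (s : σ) :
    (a :: u).foldl f s = f (u.foldl f s) a := by
  induction u generalizing s with
  | nil => rfl
  | cons b u ih =>
    rw [foldl_cons, foldl_cons, h s b mem_cons_self, ← foldl_cons,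
      ih (fun s x hx => h s x (mem_cons_of_mem _ hx)), foldl_cons]

theorem List.Perm.foldl_eq_of_pairwise {α σ : Type*} {prec : α → α → Prop} {f : σ → α → σ}
    (hcomm : ∀ (s : σ) (a b : α), ¬ prec a b → ¬ prec b a → f (f s a) b = f (f s b) a)
    {l₁ l₂ : List α} (hperm : l₁.Perm l₂)
    (h₁ : l₁.Pairwise (fun a b => ¬ prec b a)) (h₂ : l₂.Pairwise (fun a b => ¬ prec b a))
    (s : σ) : l₁.foldl f s = l₂.foldl f s := by
  classical
  induction l₁ generalizing l₂ s with
  | nil => rw [hperm.nil_eq]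
  | cons a t ih =>
    obtain ⟨u, v, hau, rfl, -⟩ := exists_erase_eq (hperm.subset mem_cons_self)
    rw [pairwise_cons] at h₁
    have hconcurrent : ∀ x ∈ u, ¬ prec a x ∧ ¬ prec x a := fun x hx =>
      ⟨(pairwise_append.1 h₂).2.2 x hx a mem_cons_self,
        h₁.1 x ((mem_cons.1 (hperm.symm.subset (mem_append_left _ hx))).resolve_left
          fun hxa => hau (hxa ▸ hx))⟩
    have hperm' : t.Perm (u ++ v) := (hperm.trans perm_middle).cons_inv
    calc (a :: t).foldl f s = (u ++ v).foldl f (f s a) :=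
          ih hperm' h₁.2 (h₂.sublist ((sublist_cons_self a v).append_left u)) _
      _ = (u ++ a :: v).foldl f s := by
          rw [foldl_append, foldl_append, ← foldl_cons,
            foldl_cons_eq_apply_foldl_of_forall_mem
              fun s x hx => hcomm s a x (hconcurrent x hx).1 (hconcurrent x hx).2,
            foldl_cons]

theorem foldl_eq_of_respectsCausalOrder_general {α σ : Type*} (prec : α → α → Prop)
    (f : σ → α → σ)
    (hcomm : ∀ (s : σ) (a b : α), ¬ prec a b → ¬ prec b a →
      f (f s a) b = f (f s b) a)
    (l₁ l₂ : List α) (hperm : l₁.Perm l₂)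
    (h₁ : RespectsCausalOrder prec l₁) (h₂ : RespectsCausalOrder prec l₂)
    (s : σ) :
    List.foldl f s l₁ = List.foldl f s l₂ :=
  hperm.foldl_eq_of_pairwise hcomm h₁.pairwise h₂.pairwise s

/-- Convergence: if `f` commutes on concurrent messages, then folding `f` over
two duplicate-free causal-order-respecting permutations of the same set of
messages yields the same state. -/
theorem foldl_eq_of_respectsCausalOrder {α σ : Type*} (prec : α → α → Prop)
    (hirr : ∀ a : α, ¬ prec a a)
    (htrans : ∀ a b c : α, prec a b → prec b c → prec a c)
    (f : σ → α → σ)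
    (hcomm : ∀ (s : σ) (a b : α), ¬ prec a b → ¬ prec b a →
      f (f s a) b = f (f s b) a)
    (l₁ l₂ : List α) (hperm : l₁.Perm l₂)
    (h₁ : RespectsCausalOrder prec l₁) (h₂ : RespectsCausalOrder prec l₂)
    (s : σ) :
    List.foldl f s l₁ = List.foldl f s l₂ :=
  foldl_eq_of_respectsCausalOrder_general prec f hcomm l₁ l₂ hperm h₁ h₂ s
end

section
/- For any type α and sets S, ins₁, ins₂, del₁, del₂ : Set α, if ins₁ ∩ del₂ = ∅ and ins₂ ∩ del₁ = ∅, then (((S \ del₁) ∪ ins₁) \ del₂) ∪ ins₂ = (((S \ del₂) ∪ ins₂) \ del₁) ∪ ins₁. (The core set-theoretic identity showing that two insert/delete updates whose insertions are disjoint from each other's deletions commute.) -/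
/-- Two insert/delete updates whose insertions are disjoint from each other's
deletions commute. -/
theorem insert_delete_updates_commute {α : Type*}
    (S ins₁ ins₂ del₁ del₂ : Set α)
    (h₁ : ins₁ ∩ del₂ = ∅) (h₂ : ins₂ ∩ del₁ = ∅) :
    (((S \ del₁) ∪ ins₁) \ del₂) ∪ ins₂ = (((S \ del₂) ∪ ins₂) \ del₁) ∪ ins₁ := by
  ext x
  have h1 := Set.eq_empty_iff_forall_notMem.mp h₁ x
  have h2 := Set.eq_empty_iff_forall_notMem.mp h₂ x
  simp only [Set.mem_inter_iff, not_and] at h1 h2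
  simp only [Set.mem_union, Set.mem_diff]
  tauto
end

section
/- Let δ, ρ, τ be types (hash values, relation names, tuples) and let replica states be sets S : Set (δ × ρ × τ). Define the effect of delivering a message with hash h, deletion set del : Set (δ × ρ × τ) and insertion set ins : Set (ρ × τ) on state S as (S \ del) ∪ {(h, r, t) | (r, t) ∈ ins}. Suppose two messages have distinct hashes h₁ and h₂ with deletion sets del₁, del₂ and insertion sets ins₁, ins₂, such that every element x ∈ del₁ has x.1 ≠ h₂ and every element x ∈ del₂ has x.1 ≠ h₁ (each message's deletions reference only hashes of its own causal predecessors, and neither message precedes the other). Then for every state S, applying the first message's effect followed by the second's yields the same set as applying the second's effect followed by the first's. (In Algorithm 3, delivering two concurrent messages in either order has the same effect on the replica state.) -/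
/-- The effect of delivering a message with hash `h`, deletion set `del` and
insertion set `ins` on replica state `S`: deleted triples are removed, and
inserted (relation, tuple) pairs are tagged with the message's hash and added. -/
def deliverEffect {δ ρ τ : Type*} (S : Set (δ × ρ × τ))
    (h : δ) (del : Set (δ × ρ × τ)) (ins : Set (ρ × τ)) : Set (δ × ρ × τ) :=
  (S \ del) ∪ {x : δ × ρ × τ | x.1 = h ∧ (x.2.1, x.2.2) ∈ ins}

/-- Delivering two concurrent messages (neither of whose deletions references
the other's hash) in either order has the same effect on the replica state. -/
theorem deliverEffect_comm {δ ρ τ : Type*}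
    (h₁ h₂ : δ) (hne : h₁ ≠ h₂)
    (del₁ del₂ : Set (δ × ρ × τ)) (ins₁ ins₂ : Set (ρ × τ))
    (hd₁ : ∀ x ∈ del₁, x.1 ≠ h₂) (hd₂ : ∀ x ∈ del₂, x.1 ≠ h₁)
    (S : Set (δ × ρ × τ)) :
    deliverEffect (deliverEffect S h₁ del₁ ins₁) h₂ del₂ ins₂ =
      deliverEffect (deliverEffect S h₂ del₂ ins₂) h₁ del₁ ins₁ := by
  ext x
  simp only [deliverEffect, Set.mem_union, Set.mem_diff, Set.mem_setOf_eq]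
  constructor
  · rintro (⟨(⟨hS, hn1⟩ | ⟨hx1, hx2⟩), hn2⟩ | ⟨hx2, hx2'⟩)
    · exact Or.inl ⟨Or.inl ⟨hS, hn2⟩, hn1⟩
    · exact Or.inr ⟨hx1, hx2⟩
    · exact Or.inl ⟨Or.inr ⟨hx2, hx2'⟩, fun hm => hd₁ x hm (hx2 ▸ rfl)⟩
  · rintro (⟨(⟨hS, hn2⟩ | ⟨hx2, hx2'⟩), hn1⟩ | ⟨hx1, hx1'⟩)
    · exact Or.inl ⟨Or.inl ⟨hS, hn1⟩, hn2⟩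
    · exact Or.inr ⟨hx2, hx2'⟩
    · exact Or.inl ⟨Or.inr ⟨hx1, hx1'⟩, fun hm => hd₂ x hm (hx1 ▸ rfl)⟩
end

section
/- Let α be a type, prec : α → α → Prop a predecessor relation, and M_p, M_q : Finset α two finite sets, each predecessor-closed (for i ∈ {p,q}: ∀ m ∈ M_i, ∀ m', prec m' m → m' ∈ M_i), such that the restriction of prec to M_q is acyclic (no m ∈ M_q with TransGen (fun a b => prec a b ∧ a ∈ M_q ∧ b ∈ M_q) m m). Then for every m ∈ M_q with m ∉ M_p, there exists h ∈ M_q with no successors in M_q (∀ m'' ∈ M_q, ¬ prec h m'') and h ∉ M_p, such that Relation.ReflTransGen (fun a b => prec a b ∧ a ∈ M_q ∧ a ∉ M_p ∧ b ∈ M_q ∧ b ∉ M_p) m h. (Every message known to replica q but missing at replica p lies on a chain of missing messages descending from a head of q's message set, so reconciliation, which traverses predecessors from the heads and stops at already-known messages, finds every missing message.) -/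
/-- Every message known to replica `q` but missing at replica `p` lies on a
chain of missing messages descending from a head of `q`'s message set. -/
theorem exists_missing_head_reaches {α : Type*} (prec : α → α → Prop)
    (Mp Mq : Finset α)
    (hclosedP : ∀ m ∈ Mp, ∀ m', prec m' m → m' ∈ Mp)
    (hclosedQ : ∀ m ∈ Mq, ∀ m', prec m' m → m' ∈ Mq)
    (hacyc : ∀ m ∈ Mq,
      ¬ Relation.TransGen (fun a b => prec a b ∧ a ∈ Mq ∧ b ∈ Mq) m m) :
    ∀ m ∈ Mq, m ∉ Mp → ∃ h ∈ Mq, (∀ m'' ∈ Mq, ¬ prec h m'') ∧ h ∉ Mp ∧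
      Relation.ReflTransGen
        (fun a b => prec a b ∧ a ∈ Mq ∧ a ∉ Mp ∧ b ∈ Mq ∧ b ∉ Mp) m h := by
  classical
  set r : α → α → Prop := fun a b => prec a b ∧ a ∈ Mq ∧ b ∈ Mq with hr
  set μ : α → ℕ := fun m => (Mq.filter (fun x => Relation.ReflTransGen r m x)).card with hμ
  have key : ∀ n : ℕ, ∀ m ∈ Mq, m ∉ Mp → μ m ≤ n →
      ∃ h ∈ Mq, (∀ m'' ∈ Mq, ¬ prec h m'') ∧ h ∉ Mp ∧
      Relation.ReflTransGen
        (fun a b => prec a b ∧ a ∈ Mq ∧ a ∉ Mp ∧ b ∈ Mq ∧ b ∉ Mp) m h := by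
    intro n
    induction n with
    | zero =>
      intro m hmQ _ hle
      exfalso
      have : m ∈ Mq.filter (fun x => Relation.ReflTransGen r m x) :=
        Finset.mem_filter.2 ⟨hmQ, Relation.ReflTransGen.refl⟩
      have h1 := Finset.card_pos.2 ⟨m, this⟩
      simp only [μ] at hle
      omega
    | succ n ih =>
      intro m hmQ hmP hle
      by_cases hhead : ∀ m'' ∈ Mq, ¬ prec m m''
      · exact ⟨m, hmQ, hhead, hmP, Relation.ReflTransGen.refl⟩
      · push_neg at hhead
        obtain ⟨m'', hm''Q, hprec⟩ := hhead
        have hm''P : m'' ∉ Mp := fun h => hmP (hclosedP m'' h m hprec)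
        have hrm : r m m'' := ⟨hprec, hmQ, hm''Q⟩
        have hsub : Mq.filter (fun x => Relation.ReflTransGen r m'' x) ⊆
            Mq.filter (fun x => Relation.ReflTransGen r m x) := by
          intro x hx
          rcases Finset.mem_filter.1 hx with ⟨hxQ, hreach⟩
          exact Finset.mem_filter.2 ⟨hxQ, Relation.ReflTransGen.head hrm hreach⟩
        have hmem : m ∈ Mq.filter (fun x => Relation.ReflTransGen r m x) :=
          Finset.mem_filter.2 ⟨hmQ, Relation.ReflTransGen.refl⟩
        have hnmem : m ∉ Mq.filter (fun x => Relation.ReflTransGen r m'' x) := by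
          intro h
          rcases Finset.mem_filter.1 h with ⟨_, hreach⟩
          exact hacyc m hmQ (Relation.TransGen.head' hrm hreach)
        have hlt : μ m'' < μ m :=
          Finset.card_lt_card (Finset.ssubset_iff_of_subset hsub |>.2 ⟨m, hmem, hnmem⟩)
        obtain ⟨h, hhQ, hh1, hh2, hh3⟩ := ih m'' hm''Q hm''P (by omega)
        exact ⟨h, hhQ, hh1, hh2,
          Relation.ReflTransGen.head ⟨hprec, hmQ, hmP, hm''Q, hm''P⟩ hh3⟩
  intro m hmQ hmP
  exact key (μ m) m hmQ hmP le_rfl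
end
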